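/- arXiv:1907.05816 — 4 statements merged into one kernel-verified Lean document; each statement's English description precedes it below -/
import Mathlib

section
/- Fix constants c₀ > 0 and c > 0, and let 1 ≤ p < q ≤ 2 with q − p ≥ c. There exists a constant C > 0, depending only on c₀ and c, such that the following holds. Let a_1, …, a_m be non-negative reals with ∑_{j=1}^m a_j^p ≤ 1, and let Ẑ_1, …, Ẑ_m be real random variables on a common probability space (not necessarily independent) such that for every j and every λ ≥ 1, P(|Ẑ_j| ≥ λ) ≤ c₀ λ^{−p}. Then for every λ ≥ 1, P(∑_{j=1}^m a_j^q |Ẑ_j|^q ≥ C λ^q) ≤ λ^{−p}. -/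
/-!
Fix `K ≥ 1` and split the event according to whether some `a j * |Ẑ j|` reaches `K λ`. By the
tail bound at level `K λ / a j` and a union bound, this happens with probability at most
`c₀ (K λ)^{-p} ∑ a j ^ p ≤ λ^{-p} / 2` once `K^p ≥ 2 c₀`. Otherwise the terms with `|Ẑ j| < λ`
contribute at most `λ^q ∑ a j ^ p ≤ λ^q`, and the others lie in the window
`a j λ ≤ a j |Ẑ j| ≤ K λ`. Cutting the window into dyadic levels `[2^k a j λ, 2^{k+1} a j λ]` and
applying the tail bound on each level bounds the `q`-th moment of the windowed term by
`c₀ a j ^ p (K λ)^{q-p}` times a geometric series of ratio `2^{q-p} > 1`, dominated by its last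
term; its constant is `O(1 / (q - p))`. Markov's inequality for the sum of the windowed terms then
gives the other `λ^{-p} / 2`. Only union bounds and linearity of expectation are used, so the
`Ẑ j` may be arbitrarily dependent.
-/

open MeasureTheory Finset

lemma div_two_le_two_rpow_sub_one {x : ℝ} (hx : 0 ≤ x) : x / 2 ≤ (2 : ℝ) ^ x - 1 := by
  have h_exp : Real.log 2 * x + 1 ≤ (2 : ℝ) ^ x := by
    rw [Real.rpow_def_of_pos two_pos]
    exact Real.add_one_le_exp _
  nlinarith [Real.log_two_gt_d9]

lemma geom_sum_le_pow_div_sub_one {r : ℝ} (hr : 1 < r) (n : ℕ) :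
    ∑ k ∈ range n, r ^ k ≤ r ^ n / (r - 1) := by
  rw [geom_sum_eq hr.ne' n]
  gcongr
  linarith

lemma le_one_of_sum_rpow_le_one {ι : Type*} [Fintype ι] {a : ι → ℝ} {p : ℝ} (hp : 0 < p)
    (ha : ∀ j, 0 ≤ a j) (hsum : ∑ j, a j ^ p ≤ 1) (j : ι) : a j ≤ 1 := by
  by_contra! h
  have h_single : a j ^ p ≤ ∑ i, a i ^ p :=
    single_le_sum (fun i _ => Real.rpow_nonneg (ha i) p) (mem_univ j)
  linarith [Real.one_lt_rpow h hp]

noncomputable def dyadicMomentConst (p q : ℝ) : ℝ := 2 ^ q * 2 ^ (q - p) / (2 ^ (q - p) - 1)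

lemma dyadicMomentConst_nonneg {p q : ℝ} (hpq : p < q) : 0 ≤ dyadicMomentConst p q := by
  have h_ratio := Real.one_lt_rpow one_lt_two (sub_pos.mpr hpq)
  unfold dyadicMomentConst
  positivity

lemma dyadicMomentConst_le {p q c : ℝ} (hp : 1 ≤ p) (hq : q ≤ 2) (hc : 0 < c)
    (hcqp : c ≤ q - p) : dyadicMomentConst p q ≤ 16 / c := by
  have h_two_q : (2 : ℝ) ^ q ≤ 4 :=
    (Real.rpow_le_rpow_of_exponent_le one_le_two hq).trans_eq (by norm_num)
  have h_ratio_le : (2 : ℝ) ^ (q - p) ≤ 2 := by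
    simpa using Real.rpow_le_rpow_of_exponent_le one_le_two (by linarith : q - p ≤ 1)
  have h_ratio_sub : c / 2 ≤ (2 : ℝ) ^ (q - p) - 1 :=
    le_trans (by linarith) (div_two_le_two_rpow_sub_one (by linarith))
  calc dyadicMomentConst p q ≤ 4 * 2 / (c / 2) := by
        unfold dyadicMomentConst
        gcongr
    _ = 16 / c := by ring

lemma mul_rpow_neg_le_half {c₀ K p : ℝ} (hc₀ : 0 ≤ c₀) (hK : 1 ≤ K) (hcK : 2 * c₀ ≤ K)
    (hp : 1 ≤ p) : c₀ * K ^ (-p) ≤ 1 / 2 := by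
  have h_pow : K ^ (-p) ≤ K⁻¹ := by
    simpa [Real.rpow_neg_one] using Real.rpow_le_rpow_of_exponent_le hK (neg_le_neg hp)
  have h_inv : c₀ * K⁻¹ ≤ 1 / 2 := by
    rw [← div_eq_mul_inv, div_le_iff₀ (by positivity)]
    linarith
  linarith [mul_le_mul_of_nonneg_left h_pow hc₀]

lemma mul_dyadicMomentConst_div_le_half {c₀ c K p q : ℝ} (hc₀ : 0 < c₀) (hc : 0 < c)
    (hK : 1 ≤ K) (hp : 1 ≤ p) (hq : q ≤ 2) (hcqp : c ≤ q - p) :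
    c₀ * dyadicMomentConst p q * K ^ (q - p) / (32 * c₀ * K / c) ≤ 1 / 2 :=
  calc c₀ * dyadicMomentConst p q * K ^ (q - p) / (32 * c₀ * K / c)
      ≤ c₀ * (16 / c) * K / (32 * c₀ * K / c) := by
        have h_pow : K ^ (q - p) ≤ K := by
          simpa using Real.rpow_le_rpow_of_exponent_le hK (by linarith : q - p ≤ 1)
        have h_const := dyadicMomentConst_le hp hq hc hcqp
        have h_const_nonneg := dyadicMomentConst_nonneg (by linarith : p < q)
        gcongr
    _ = 1 / 2 := by
        field_simp
        ring

lemma dyadic_level_eq {s : ℝ} (hs : 0 < s) (c₀ p q : ℝ) (k : ℕ) :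
    (2 ^ (k + 1) * s) ^ q * (c₀ * (2 ^ k * s) ^ (-p))
      = c₀ * 2 ^ q * s ^ (q - p) * ((2 : ℝ) ^ (q - p)) ^ k := by
  have h_level : (0 : ℝ) < 2 ^ k * s := by positivity
  have h_double : (2 : ℝ) ^ (k + 1) * s = 2 * (2 ^ k * s) := by ring
  have h_pow : (2 ^ k * s) ^ q * (2 ^ k * s) ^ (-p) = ((2 : ℝ) ^ (q - p)) ^ k * s ^ (q - p) := by
    rw [← Real.rpow_add h_level, ← sub_eq_add_neg, Real.mul_rpow (by positivity) hs.le,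
      Real.rpow_pow_comm zero_le_two]
  rw [h_double, Real.mul_rpow zero_le_two h_level.le]
  linear_combination c₀ * 2 ^ q * h_pow

section

variable {Ω : Type*}

noncomputable def truncRpow (Y : Ω → ℝ) (s T q : ℝ) : Ω → ℝ :=
  {ω | s ≤ Y ω ∧ Y ω ≤ T}.indicator fun ω => Y ω ^ q

lemma truncRpow_nonneg {Y : Ω → ℝ} {s T q : ℝ} (hs : 0 ≤ s) (ω : Ω) :
    0 ≤ truncRpow Y s T q ω :=
  Set.indicator_nonneg (fun _ hω => Real.rpow_nonneg (hs.trans hω.1) q) ω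

lemma ofReal_truncRpow_le_sum_indicator {Y : Ω → ℝ} {s T q : ℝ} (hs : 0 < s) (hq : 0 ≤ q)
    {N : ℕ} (hN : T < 2 ^ N * s) (ω : Ω) :
    ENNReal.ofReal (truncRpow Y s T q ω) ≤ ∑ k ∈ range N,
      {ω | 2 ^ k * s ≤ Y ω}.indicator (fun _ => ENNReal.ofReal ((2 ^ (k + 1) * s) ^ q)) ω := by
  by_cases hω : s ≤ Y ω ∧ Y ω ≤ T
  · obtain ⟨k, hk_le, hk_lt⟩ :=
      exists_nat_pow_near ((one_le_div hs).mpr hω.1) (one_lt_two : (1 : ℝ) < 2)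
    rw [le_div_iff₀ hs] at hk_le
    rw [div_lt_iff₀ hs] at hk_lt
    have hkN : k < N := by
      have : (2 : ℝ) ^ k < 2 ^ N :=
        lt_of_mul_lt_mul_right (hk_le.trans_lt (hω.2.trans_lt hN)) hs.le
      exact (pow_lt_pow_iff_right₀ one_lt_two).mp this
    have h_term : ENNReal.ofReal (truncRpow Y s T q ω)
        ≤ {ω | 2 ^ k * s ≤ Y ω}.indicator (fun _ => ENNReal.ofReal ((2 ^ (k + 1) * s) ^ q)) ω := by
      rw [truncRpow, Set.indicator_of_mem (show ω ∈ {ω | s ≤ Y ω ∧ Y ω ≤ T} from hω),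
        Set.indicator_of_mem (show ω ∈ {ω | 2 ^ k * s ≤ Y ω} from hk_le)]
      exact ENNReal.ofReal_le_ofReal (Real.rpow_le_rpow (hs.le.trans hω.1) hk_lt.le hq)
    refine h_term.trans ?_
    apply single_le_sum (fun _ _ => zero_le) (mem_range.mpr hkN)
  · rw [truncRpow, Set.indicator_of_notMem (show ω ∉ {ω | s ≤ Y ω ∧ Y ω ≤ T} from hω),
      ENNReal.ofReal_zero]
    exact zero_le

lemma rpow_mul_rpow_abs_le_add_truncRpow {Y : Ω → ℝ} {b p q lam K : ℝ} (hb0 : 0 ≤ b)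
    (hb1 : b ≤ 1) (hp : 0 ≤ p) (hpq : p ≤ q) (hlam : 0 ≤ lam) {ω : Ω} (hω : b * |Y ω| ≤ K * lam) :
    b ^ q * |Y ω| ^ q
      ≤ b ^ p * lam ^ q + truncRpow (fun ω => b * |Y ω|) (b * lam) (K * lam) q ω := by
  have hq : 0 ≤ q := hp.trans hpq
  rw [← Real.mul_rpow hb0 (abs_nonneg _)]
  by_cases h_window : b * lam ≤ b * |Y ω|
  · rw [truncRpow, Set.indicator_of_mem
      (show ω ∈ {ω | b * lam ≤ b * |Y ω| ∧ b * |Y ω| ≤ K * lam} from ⟨h_window, hω⟩)]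
    have : 0 ≤ b ^ p * lam ^ q := by positivity
    linarith
  · rw [truncRpow, Set.indicator_of_notMem (fun h => h_window h.1), add_zero]
    calc (b * |Y ω|) ^ q ≤ (b * lam) ^ q :=
          Real.rpow_le_rpow (by positivity) (not_le.mp h_window).le hq
      _ = b ^ q * lam ^ q := Real.mul_rpow hb0 hlam
      _ ≤ b ^ p * lam ^ q :=
          mul_le_mul_of_nonneg_right (Real.rpow_le_rpow_of_exponent_ge' hb0 hb1 hp hpq)
            (by positivity)

lemma setOf_le_sum_rpow_subset {ι : Type*} [Fintype ι] {Z : ι → Ω → ℝ} {a : ι → ℝ}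
    {p q lam K M : ℝ} (ha : ∀ j, 0 ≤ a j) (ha1 : ∀ j, a j ≤ 1)
    (hsum : ∑ j, a j ^ p ≤ 1) (hp : 0 ≤ p) (hpq : p ≤ q) (hlam : 0 ≤ lam) :
    {ω | (1 + M) * lam ^ q ≤ ∑ j, a j ^ q * |Z j ω| ^ q}
      ⊆ (⋃ j, {ω | K * lam ≤ a j * |Z j ω|}) ∪
        {ω | M * lam ^ q ≤ ∑ j, truncRpow (fun ω => a j * |Z j ω|) (a j * lam) (K * lam) q ω} := by
  intro ω hω
  by_cases h_large : ω ∈ ⋃ j, {ω | K * lam ≤ a j * |Z j ω|}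
  · exact Or.inl h_large
  · right
    simp only [Set.mem_iUnion, Set.mem_ofPred_eq, not_exists, not_le] at h_large hω
    have h_split : ∑ j, a j ^ q * |Z j ω| ^ q
        ≤ lam ^ q + ∑ j, truncRpow (fun ω => a j * |Z j ω|) (a j * lam) (K * lam) q ω :=
      calc ∑ j, a j ^ q * |Z j ω| ^ q
          ≤ ∑ j, (a j ^ p * lam ^ q
              + truncRpow (fun ω => a j * |Z j ω|) (a j * lam) (K * lam) q ω) :=
            sum_le_sum fun j _ => rpow_mul_rpow_abs_le_add_truncRpow (ha j) (ha1 j) hp hpq hlam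
              (h_large j).le
        _ = (∑ j, a j ^ p) * lam ^ q
              + ∑ j, truncRpow (fun ω => a j * |Z j ω|) (a j * lam) (K * lam) q ω := by
            rw [sum_add_distrib, sum_mul]
        _ ≤ lam ^ q + ∑ j, truncRpow (fun ω => a j * |Z j ω|) (a j * lam) (K * lam) q ω := by
            gcongr
            exact mul_le_of_le_one_left (by positivity) hsum
    show M * lam ^ q ≤ _
    linarith

variable [MeasurableSpace Ω] {μ : Measure Ω}

lemma measurable_truncRpow {Y : Ω → ℝ} (hY : Measurable Y) (s T q : ℝ) :
    Measurable (truncRpow Y s T q) :=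
  (hY.pow_const q).indicator
    ((measurableSet_le measurable_const hY).inter (measurableSet_le hY measurable_const))

lemma measure_ge_le_ofReal_div {F : Ω → ℝ} (hF : Measurable F) (hF0 : ∀ ω, 0 ≤ F ω)
    {ε I : ℝ} (hε : 0 < ε) (hI : ∫⁻ ω, ENNReal.ofReal (F ω) ∂μ ≤ ENNReal.ofReal I) :
    μ {ω | ε ≤ F ω} ≤ ENNReal.ofReal (I / ε) := by
  have h_set : {ω | ε ≤ F ω} = {ω | ENNReal.ofReal ε ≤ ENNReal.ofReal (F ω)} := by
    ext ω
    simp only [Set.mem_ofPred_eq, ENNReal.ofReal_le_ofReal_iff (hF0 ω)]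
  calc μ {ω | ε ≤ F ω}
      ≤ (∫⁻ ω, ENNReal.ofReal (F ω) ∂μ) / ENNReal.ofReal ε := by
        rw [h_set]
        exact meas_ge_le_lintegral_div hF.ennreal_ofReal.aemeasurable
          (ENNReal.ofReal_pos.mpr hε).ne' ENNReal.ofReal_ne_top
    _ ≤ ENNReal.ofReal I / ENNReal.ofReal ε := by gcongr
    _ = ENNReal.ofReal (I / ε) := (ENNReal.ofReal_div_of_pos hε).symm

theorem lintegral_truncRpow_le {Y : Ω → ℝ} (hY : Measurable Y) {c₀ p q s T : ℝ}
    (hc₀ : 0 ≤ c₀) (hq : 0 ≤ q) (hpq : p < q) (hs : 0 < s) (hsT : s ≤ T)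
    (htail : ∀ t, s ≤ t → μ {ω | t ≤ Y ω} ≤ ENNReal.ofReal (c₀ * t ^ (-p))) :
    ∫⁻ ω, ENNReal.ofReal (truncRpow Y s T q ω) ∂μ
      ≤ ENNReal.ofReal (c₀ * dyadicMomentConst p q * T ^ (q - p)) := by
  obtain ⟨n, hn_le, hn_lt⟩ := exists_nat_pow_near ((one_le_div hs).mpr hsT) one_lt_two
  rw [le_div_iff₀ hs] at hn_le
  rw [div_lt_iff₀ hs] at hn_lt
  set r : ℝ := 2 ^ (q - p)
  have hr : 1 < r := Real.one_lt_rpow one_lt_two (sub_pos.mpr hpq)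
  have h_levelset (k : ℕ) : MeasurableSet {ω | 2 ^ k * s ≤ Y ω} :=
    measurableSet_le measurable_const hY
  have h_level (k : ℕ) : ∫⁻ ω, {ω | 2 ^ k * s ≤ Y ω}.indicator
      (fun _ => ENNReal.ofReal ((2 ^ (k + 1) * s) ^ q)) ω ∂μ
        ≤ ENNReal.ofReal (c₀ * 2 ^ q * s ^ (q - p) * r ^ k) := by
    rw [lintegral_indicator_const (h_levelset k), ← dyadic_level_eq hs,
      ENNReal.ofReal_mul (by positivity)]
    gcongr
    exact htail _ (le_mul_of_one_le_left hs.le (one_le_pow₀ one_le_two))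
  have h_geom : ∑ k ∈ range (n + 1), c₀ * 2 ^ q * s ^ (q - p) * r ^ k
      ≤ c₀ * dyadicMomentConst p q * T ^ (q - p) := by
    rw [← mul_sum]
    calc c₀ * 2 ^ q * s ^ (q - p) * ∑ k ∈ range (n + 1), r ^ k
        ≤ c₀ * 2 ^ q * s ^ (q - p) * (r ^ (n + 1) / (r - 1)) := by
          gcongr
          exact geom_sum_le_pow_div_sub_one hr _
      _ = c₀ * dyadicMomentConst p q * (2 ^ n * s) ^ (q - p) := by
          rw [dyadicMomentConst, Real.mul_rpow (by positivity) hs.le,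
            ← Real.rpow_pow_comm zero_le_two, pow_succ]
          ring
      _ ≤ c₀ * dyadicMomentConst p q * T ^ (q - p) := by
          have h_const_nonneg := dyadicMomentConst_nonneg hpq
          gcongr
  calc ∫⁻ ω, ENNReal.ofReal (truncRpow Y s T q ω) ∂μ
      ≤ ∫⁻ ω, ∑ k ∈ range (n + 1), {ω | 2 ^ k * s ≤ Y ω}.indicator
          (fun _ => ENNReal.ofReal ((2 ^ (k + 1) * s) ^ q)) ω ∂μ :=
        lintegral_mono (ofReal_truncRpow_le_sum_indicator hs hq hn_lt)
    _ = ∑ k ∈ range (n + 1), ∫⁻ ω, {ω | 2 ^ k * s ≤ Y ω}.indicator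
          (fun _ => ENNReal.ofReal ((2 ^ (k + 1) * s) ^ q)) ω ∂μ :=
        lintegral_finsetSum _ fun k _ => measurable_const.indicator (h_levelset k)
    _ ≤ ∑ k ∈ range (n + 1), ENNReal.ofReal (c₀ * 2 ^ q * s ^ (q - p) * r ^ k) :=
        sum_le_sum fun k _ => h_level k
    _ = ENNReal.ofReal (∑ k ∈ range (n + 1), c₀ * 2 ^ q * s ^ (q - p) * r ^ k) :=
        (ENNReal.ofReal_sum_of_nonneg fun k _ => by positivity).symm
    _ ≤ ENNReal.ofReal (c₀ * dyadicMomentConst p q * T ^ (q - p)) :=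
        ENNReal.ofReal_le_ofReal h_geom

lemma measure_le_mul_abs_le {Y : Ω → ℝ} {c₀ p a t : ℝ}
    (htail : ∀ t : ℝ, 1 ≤ t → μ {ω | t ≤ |Y ω|} ≤ ENNReal.ofReal (c₀ * t ^ (-p)))
    (ha : 0 ≤ a) (hat : a ≤ t) (ht : 0 < t) :
    μ {ω | t ≤ a * |Y ω|} ≤ ENNReal.ofReal (c₀ * a ^ p * t ^ (-p)) := by
  rcases ha.eq_or_lt with rfl | ha_pos
  · have h_empty : {ω | t ≤ 0 * |Y ω|} = ∅ := by
      ext ω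
      simp [ht]
    rw [h_empty, measure_empty]
    exact zero_le
  · have h_set : {ω | t ≤ a * |Y ω|} = {ω | t / a ≤ |Y ω|} := by
      ext ω
      rw [Set.mem_ofPred_eq, Set.mem_ofPred_eq, div_le_iff₀ ha_pos, mul_comm]
    rw [h_set]
    refine (htail _ ((one_le_div ha_pos).mpr hat)).trans (le_of_eq ?_)
    rw [Real.div_rpow ht.le ha, Real.rpow_neg ha, div_inv_eq_mul]
    congr 1
    ring

lemma lintegral_truncRpow_mul_abs_le {Y : Ω → ℝ} (hY : Measurable Y) {c₀ p q a lam K : ℝ}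
    (htail : ∀ t : ℝ, 1 ≤ t → μ {ω | t ≤ |Y ω|} ≤ ENNReal.ofReal (c₀ * t ^ (-p)))
    (hc₀ : 0 ≤ c₀) (hq : 0 < q) (hpq : p < q) (ha : 0 ≤ a) (haK : a ≤ K) (hlam : 1 ≤ lam) :
    ∫⁻ ω, ENNReal.ofReal (truncRpow (fun ω => a * |Y ω|) (a * lam) (K * lam) q ω) ∂μ
      ≤ ENNReal.ofReal (c₀ * a ^ p * dyadicMomentConst p q * (K * lam) ^ (q - p)) := by
  rcases ha.eq_or_lt with rfl | ha_pos
  · simp [truncRpow, Real.zero_rpow hq.ne']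
  · have h_lower : 0 < a * lam := mul_pos ha_pos (by linarith)
    refine lintegral_truncRpow_le (by fun_prop) (by positivity) hq.le hpq h_lower (by gcongr)
      fun t ht => measure_le_mul_abs_le htail ha ?_ (h_lower.trans_le ht)
    nlinarith

variable {ι : Type*} [Fintype ι] {Z : ι → Ω → ℝ} {a : ι → ℝ} {c₀ p q lam K : ℝ}

lemma measure_iUnion_le_mul_abs_le {t : ℝ}
    (htail : ∀ j, ∀ t : ℝ, 1 ≤ t → μ {ω | t ≤ |Z j ω|} ≤ ENNReal.ofReal (c₀ * t ^ (-p)))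
    (hc₀ : 0 ≤ c₀) (ha : ∀ j, 0 ≤ a j) (hsum : ∑ j, a j ^ p ≤ 1) (hat : ∀ j, a j ≤ t)
    (ht : 0 < t) :
    μ (⋃ j, {ω | t ≤ a j * |Z j ω|}) ≤ ENNReal.ofReal (c₀ * t ^ (-p)) :=
  calc μ (⋃ j, {ω | t ≤ a j * |Z j ω|})
      ≤ ∑ j, μ {ω | t ≤ a j * |Z j ω|} := measure_iUnion_fintype_le _ _
    _ ≤ ∑ j, ENNReal.ofReal (c₀ * a j ^ p * t ^ (-p)) :=
        sum_le_sum fun j _ => measure_le_mul_abs_le (htail j) (ha j) (hat j) ht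
    _ = ENNReal.ofReal (∑ j, c₀ * a j ^ p * t ^ (-p)) :=
        (ENNReal.ofReal_sum_of_nonneg fun j _ => by have := ha j; positivity).symm
    _ ≤ ENNReal.ofReal (c₀ * t ^ (-p)) := by
        rw [← sum_mul, ← mul_sum]
        gcongr
        exact mul_le_of_le_one_right hc₀ hsum

lemma measure_le_sum_truncRpow_le {M : ℝ} (hZ : ∀ j, Measurable (Z j))
    (htail : ∀ j, ∀ t : ℝ, 1 ≤ t → μ {ω | t ≤ |Z j ω|} ≤ ENNReal.ofReal (c₀ * t ^ (-p)))
    (hc₀ : 0 ≤ c₀) (hq : 0 < q) (hpq : p < q) (ha : ∀ j, 0 ≤ a j) (hsum : ∑ j, a j ^ p ≤ 1)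
    (hK : 0 ≤ K) (haK : ∀ j, a j ≤ K) (hlam : 1 ≤ lam) (hM : 0 < M) :
    μ {ω | M * lam ^ q ≤ ∑ j, truncRpow (fun ω => a j * |Z j ω|) (a j * lam) (K * lam) q ω}
      ≤ ENNReal.ofReal (c₀ * dyadicMomentConst p q * K ^ (q - p) / M * lam ^ (-p)) := by
  have hlam0 : 0 < lam := by linarith
  have hB := dyadicMomentConst_nonneg hpq
  have h_trunc_nonneg (j : ι) (ω : Ω) :
      0 ≤ truncRpow (fun ω => a j * |Z j ω|) (a j * lam) (K * lam) q ω :=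
    truncRpow_nonneg (mul_nonneg (ha j) hlam0.le) ω
  have h_trunc_meas (j : ι) :
      Measurable (truncRpow (fun ω => a j * |Z j ω|) (a j * lam) (K * lam) q) :=
    measurable_truncRpow (by fun_prop) _ _ _
  have h_moment : ∫⁻ ω, ENNReal.ofReal
      (∑ j, truncRpow (fun ω => a j * |Z j ω|) (a j * lam) (K * lam) q ω) ∂μ
        ≤ ENNReal.ofReal (c₀ * dyadicMomentConst p q * (K * lam) ^ (q - p)) :=
    calc _ = ∫⁻ ω, ∑ j, ENNReal.ofReal
          (truncRpow (fun ω => a j * |Z j ω|) (a j * lam) (K * lam) q ω) ∂μ :=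
          lintegral_congr fun ω => ENNReal.ofReal_sum_of_nonneg fun j _ => h_trunc_nonneg j ω
      _ = ∑ j, ∫⁻ ω, ENNReal.ofReal
          (truncRpow (fun ω => a j * |Z j ω|) (a j * lam) (K * lam) q ω) ∂μ :=
          lintegral_finsetSum _ fun j _ => (h_trunc_meas j).ennreal_ofReal
      _ ≤ ∑ j, ENNReal.ofReal
          (c₀ * a j ^ p * dyadicMomentConst p q * (K * lam) ^ (q - p)) :=
          sum_le_sum fun j _ =>
            lintegral_truncRpow_mul_abs_le (hZ j) (htail j) hc₀ hq hpq (ha j) (haK j) hlam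
      _ = ENNReal.ofReal (∑ j, c₀ * a j ^ p * dyadicMomentConst p q * (K * lam) ^ (q - p)) :=
          (ENNReal.ofReal_sum_of_nonneg fun j _ => by have := ha j; positivity).symm
      _ ≤ ENNReal.ofReal (c₀ * dyadicMomentConst p q * (K * lam) ^ (q - p)) := by
          rw [← sum_mul, ← sum_mul, ← mul_sum]
          gcongr
          exact mul_le_of_le_one_right hc₀ hsum
  refine (measure_ge_le_ofReal_div (Finset.measurable_sum _ fun j _ => h_trunc_meas j)
    (fun ω => sum_nonneg fun j _ => h_trunc_nonneg j ω) (by positivity) h_moment).trans_eq ?_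
  rw [Real.mul_rpow hK hlam0.le, Real.rpow_sub hlam0, Real.rpow_neg hlam0.le]
  congr 1
  field_simp

theorem measure_le_sum_rpow_le {M : ℝ} (hZ : ∀ j, Measurable (Z j))
    (htail : ∀ j, ∀ t : ℝ, 1 ≤ t → μ {ω | t ≤ |Z j ω|} ≤ ENNReal.ofReal (c₀ * t ^ (-p)))
    (hc₀ : 0 ≤ c₀) (hp : 0 < p) (hpq : p < q) (ha : ∀ j, 0 ≤ a j) (hsum : ∑ j, a j ^ p ≤ 1)
    (hK : 1 ≤ K) (hlam : 1 ≤ lam) (hM : 0 < M) :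
    μ {ω | (1 + M) * lam ^ q ≤ ∑ j, a j ^ q * |Z j ω| ^ q}
      ≤ ENNReal.ofReal (c₀ * K ^ (-p) * lam ^ (-p))
        + ENNReal.ofReal (c₀ * dyadicMomentConst p q * K ^ (q - p) / M * lam ^ (-p)) := by
  have ha1 := le_one_of_sum_rpow_le_one hp ha hsum
  have haK (j : ι) : a j ≤ K := (ha1 j).trans hK
  calc _ ≤ μ ((⋃ j, {ω | K * lam ≤ a j * |Z j ω|}) ∪
        {ω | M * lam ^ q ≤ ∑ j, truncRpow (fun ω => a j * |Z j ω|) (a j * lam) (K * lam) q ω}) :=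
        measure_mono (setOf_le_sum_rpow_subset ha ha1 hsum hp.le hpq.le (by linarith))
    _ ≤ _ := measure_union_le _ _
    _ ≤ _ := by
        gcongr
        · rw [mul_assoc, ← Real.mul_rpow (by linarith) (by linarith)]
          exact measure_iUnion_le_mul_abs_le htail hc₀ ha hsum
            (fun j => (haK j).trans (le_mul_of_one_le_right (by linarith) hlam)) (by positivity)
        · exact measure_le_sum_truncRpow_le hZ htail hc₀ (hp.trans hpq) hpq ha hsum
            (by linarith) haK hlam hM

end

/-- Fix `c₀ > 0` and `c > 0`. There is a constant `C > 0` (depending only on `c₀, c`) such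
that for all `1 ≤ p < q ≤ 2` with `q - p ≥ c`: if `a 1, …, a m ≥ 0` satisfy
`∑ j (a j)^p ≤ 1` and `Ẑ 1, …, Ẑ m` are (possibly dependent) random variables with
`P(|Ẑ j| ≥ λ) ≤ c₀ λ^{-p}` for all `λ ≥ 1`, then for all `λ ≥ 1`,
`P(∑ j (a j)^q |Ẑ j|^q ≥ C λ^q) ≤ λ^{-p}`. -/
theorem stmt_8 (c₀ c : ℝ) (hc₀ : 0 < c₀) (hc : 0 < c) :
    ∃ C : ℝ, 0 < C ∧
      ∀ p q : ℝ, 1 ≤ p → p < q → q ≤ 2 → c ≤ q - p →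
        ∀ (m : ℕ) (Ω : Type) [MeasurableSpace Ω] (μ : Measure Ω), IsProbabilityMeasure μ →
          ∀ (a : Fin m → ℝ) (Zh : Fin m → Ω → ℝ),
            (∀ j, 0 ≤ a j) → (∑ j, a j ^ p) ≤ 1 →
            (∀ j, Measurable (Zh j)) →
            (∀ j, ∀ lam : ℝ, 1 ≤ lam →
              μ {ω | lam ≤ |Zh j ω|} ≤ ENNReal.ofReal (c₀ * lam ^ (-p))) →
            ∀ lam : ℝ, 1 ≤ lam →
              μ {ω | C * lam ^ q ≤ ∑ j, a j ^ q * |Zh j ω| ^ q}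
                ≤ ENNReal.ofReal (lam ^ (-p)) := by
  set K := max 1 (2 * c₀)
  have hK1 : 1 ≤ K := le_max_left _ _
  refine ⟨1 + 32 * c₀ * K / c, by positivity, ?_⟩
  intro p q hp hpq hq2 hcqp m Ω _ μ _ a Zh ha hsum hmeas htail lam hlam
  calc _ ≤ _ := measure_le_sum_rpow_le hmeas htail hc₀.le (by linarith) hpq ha hsum hK1 hlam
        (by positivity)
    _ ≤ ENNReal.ofReal (1 / 2 * lam ^ (-p)) + ENNReal.ofReal (1 / 2 * lam ^ (-p)) := by
        gcongr ENNReal.ofReal (?_ * _) + ENNReal.ofReal (?_ * _)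
        · exact mul_rpow_neg_le_half hc₀.le hK1 (le_max_right _ _) hp
        · exact mul_dyadicMomentConst_div_le_half hc₀ hc hK1 hp hq2 hcqp
    _ = ENNReal.ofReal (lam ^ (-p)) := by
        rw [← ENNReal.ofReal_add (by positivity) (by positivity)]
        congr 1
        ring
end

section
/- Fix a constant c₀ > 0 and let 1 ≤ p ≤ q ≤ 2. There exists a constant C > 0, depending only on c₀, such that the following holds. Let m ≥ 2, let a_1, …, a_m be non-negative reals with ∑_{j=1}^m a_j^p ≤ 1, and let Ẑ_1, …, Ẑ_m be real random variables on a common probability space (not necessarily independent) such that for every j and every λ ≥ 1, P(|Ẑ_j| ≥ λ) ≤ c₀ λ^{−p}. Then for every λ ≥ 1, P(∑_{j=1}^m a_j^q |Ẑ_j|^q ≥ C log(λm) λ^q) ≤ λ^{−p}. -/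
open MeasureTheory

set_option maxHeartbeats 1000000

/-- Fix `c₀ > 0`. There is a constant `C > 0` (depending only on `c₀`) such that for all
`1 ≤ p ≤ q ≤ 2` and `m ≥ 2`: if `a 1, …, a m ≥ 0` satisfy `∑ j (a j)^p ≤ 1` and
`Ẑ 1, …, Ẑ m` are (possibly dependent) random variables with `P(|Ẑ j| ≥ λ) ≤ c₀ λ^{-p}`
for all `λ ≥ 1`, then for all `λ ≥ 1`,
`P(∑ j (a j)^q |Ẑ j|^q ≥ C log(λ m) λ^q) ≤ λ^{-p}`. -/
theorem stmt_9 (c₀ : ℝ) (hc₀ : 0 < c₀) :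
    ∃ C : ℝ, 0 < C ∧
      ∀ p q : ℝ, 1 ≤ p → p ≤ q → q ≤ 2 →
        ∀ (m : ℕ), 2 ≤ m →
          ∀ (Ω : Type) [MeasurableSpace Ω] (μ : Measure Ω), IsProbabilityMeasure μ →
            ∀ (a : Fin m → ℝ) (Zh : Fin m → Ω → ℝ),
              (∀ j, 0 ≤ a j) → (∑ j, a j ^ p) ≤ 1 →
              (∀ j, Measurable (Zh j)) →
              (∀ j, ∀ lam : ℝ, 1 ≤ lam →
                μ {ω | lam ≤ |Zh j ω|} ≤ ENNReal.ofReal (c₀ * lam ^ (-p))) →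
              ∀ lam : ℝ, 1 ≤ lam →
                μ {ω | C * Real.log (lam * m) * lam ^ q ≤ ∑ j, a j ^ q * |Zh j ω| ^ q}
                  ≤ ENNReal.ofReal (lam ^ (-p)) := by
  classical
  refine ⟨72 * (c₀ + 1)^2, by positivity, ?_⟩
  intro p q hp hpq hq2 m hm Ω _ μ hμ a Zh ha hsum hmeas htail lam hlam
  have hp0 : (0 : ℝ) < p := by linarith
  have hq1 : (1 : ℝ) ≤ q := le_trans hp hpq
  have hp2 : p ≤ 2 := le_trans hpq hq2
  have hqp0 : (0 : ℝ) ≤ q - p := by linarith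
  have hlam0 : (0 : ℝ) < lam := by linarith
  set K : ℝ := 2 * (c₀ + 1) with hK_def
  have hK1 : (1 : ℝ) ≤ K := by simp only [hK_def]; linarith
  have hK0 : (0 : ℝ) < K := by linarith
  set b : ℝ := K * lam with hb_def
  have hb0 : (0 : ℝ) < b := by positivity
  have hb1 : (1 : ℝ) ≤ b := by
    calc (1:ℝ) ≤ K := hK1
    _ ≤ K * lam := le_mul_of_one_le_right hK0.le hlam
  set L : ℕ := Nat.log 2 m with hL_def
  -- the basic tail bound, valid for all thresholds v > 0
  have tail : ∀ (j : Fin m) (v : ℝ), 0 < v →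
      μ {ω | v ≤ a j * |Zh j ω|} ≤ ENNReal.ofReal ((c₀ + 1) * (a j ^ p * v ^ (-p))) := by
    intro j v hv
    rcases eq_or_lt_of_le (ha j) with h0 | h0
    · have hempty : {ω | v ≤ a j * |Zh j ω|} = ∅ := by
        ext ω
        simp only [Set.mem_setOf_eq, Set.mem_empty_iff_false, iff_false, not_le, ← h0, zero_mul]
        exact hv
      rw [hempty]
      simp
    · have hvap : (0:ℝ) ≤ a j ^ p * v ^ (-p) := by positivity
      by_cases hva : 1 ≤ v / a j
      · have hsub : {ω | v ≤ a j * |Zh j ω|} = {ω | v / a j ≤ |Zh j ω|} := by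
          ext ω
          simp only [Set.mem_setOf_eq]
          rw [div_le_iff₀ h0, mul_comm]
        have hcv : (v / a j) ^ (-p) = a j ^ p * v ^ (-p) := by
          rw [Real.rpow_neg (div_pos hv h0).le, Real.div_rpow hv.le (ha j), inv_div,
            div_eq_mul_inv, Real.rpow_neg hv.le]
        rw [hsub]
        refine (htail j _ hva).trans (ENNReal.ofReal_le_ofReal ?_)
        rw [hcv]
        nlinarith
      · push_neg at hva
        have hav : 1 ≤ a j / v := by
          rw [le_div_iff₀ hv, one_mul]
          rw [div_lt_iff₀ h0, one_mul] at hva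
          linarith
        have h1 : (1:ℝ) ≤ a j ^ p * v ^ (-p) := by
          have h2 : (1:ℝ) ≤ (a j / v) ^ p := Real.one_le_rpow hav hp0.le
          rwa [Real.div_rpow (ha j) hv.le, div_eq_mul_inv, ← Real.rpow_neg hv.le] at h2
        calc μ {ω | v ≤ a j * |Zh j ω|} ≤ μ Set.univ := measure_mono (Set.subset_univ _)
          _ = 1 := measure_univ
          _ ≤ ENNReal.ofReal ((c₀ + 1) * (a j ^ p * v ^ (-p))) := by
              rw [← ENNReal.ofReal_one]
              apply ENNReal.ofReal_le_ofReal
              nlinarith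
  -- the level sets
  set A : Fin m → ℕ → Set Ω := fun j ℓ => {ω | b / 2 ^ (ℓ + 1) ≤ a j * |Zh j ω|} with hA_def
  have hAmeas : ∀ j ℓ, MeasurableSet (A j ℓ) := by
    intro j ℓ
    exact measurableSet_le measurable_const (measurable_const.mul (hmeas j).abs)
  -- real-valued dominating function
  set Wr : Ω → ℝ := fun ω => ∑ j, ∑ ℓ ∈ Finset.range (L + 1),
      (A j ℓ).indicator (fun _ => (b / 2 ^ ℓ) ^ q) ω with hWr_def
  set f : Ω → ENNReal := fun ω => ∑ j, ∑ ℓ ∈ Finset.range (L + 1),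
      (A j ℓ).indicator (fun _ => ENNReal.ofReal ((b / 2 ^ ℓ) ^ q)) ω with hf_def
  have hindnn : ∀ (j : Fin m) (ℓ : ℕ) (ω : Ω),
      0 ≤ (A j ℓ).indicator (fun _ => (b / 2 ^ ℓ) ^ q) ω := by
    intro j ℓ ω
    exact Set.indicator_nonneg (fun _ _ => Real.rpow_nonneg (by positivity) q) ω
  have hfW : ∀ ω, ENNReal.ofReal (Wr ω) = f ω := by
    intro ω
    rw [hWr_def, hf_def]
    rw [ENNReal.ofReal_sum_of_nonneg (fun j _ => Finset.sum_nonneg (fun ℓ _ => hindnn j ℓ ω))]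
    refine Finset.sum_congr rfl (fun j _ => ?_)
    rw [ENNReal.ofReal_sum_of_nonneg (fun ℓ _ => hindnn j ℓ ω)]
    refine Finset.sum_congr rfl (fun ℓ _ => ?_)
    by_cases hω : ω ∈ A j ℓ
    · simp [Set.indicator_of_mem hω]
    · simp [Set.indicator_of_notMem hω]
  have hf_meas : Measurable f := by
    apply Finset.measurable_sum
    intro j _
    apply Finset.measurable_sum
    intro ℓ _
    exact measurable_const.indicator (hAmeas j ℓ)
  -- pointwise dyadic bound on the good event
  have pt : ∀ ω, (∀ j, a j * |Zh j ω| < b) → ∀ j : Fin m,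
      (a j * |Zh j ω|) ^ q ≤ (b / 2 ^ (L + 1)) ^ q
        + ∑ ℓ ∈ Finset.range (L + 1), (A j ℓ).indicator (fun _ => (b / 2 ^ ℓ) ^ q) ω := by
    intro ω hgood j
    have ht0 : 0 ≤ a j * |Zh j ω| := mul_nonneg (ha j) (abs_nonneg _)
    have htb : a j * |Zh j ω| < b := hgood j
    have h1q : 0 ≤ (b / 2 ^ (L + 1)) ^ q := Real.rpow_nonneg (by positivity) q
    by_cases hcase : a j * |Zh j ω| < b / 2 ^ (L + 1)
    · have h1 : (a j * |Zh j ω|) ^ q ≤ (b / 2 ^ (L + 1)) ^ q :=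
        Real.rpow_le_rpow ht0 hcase.le (by linarith)
      have h2 : 0 ≤ ∑ ℓ ∈ Finset.range (L + 1),
          (A j ℓ).indicator (fun _ => (b / 2 ^ ℓ) ^ q) ω :=
        Finset.sum_nonneg (fun ℓ _ => hindnn j ℓ ω)
      linarith
    · push_neg at hcase
      have hex : ∃ ℓ : ℕ, b / 2 ^ (ℓ + 1) ≤ a j * |Zh j ω| := ⟨L, hcase⟩
      set ℓ₀ := Nat.find hex with hl0_def
      have hfind : b / 2 ^ (ℓ₀ + 1) ≤ a j * |Zh j ω| := Nat.find_spec hex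
      have hl0L : ℓ₀ ≤ L := Nat.find_min' hex hcase
      have htlt : a j * |Zh j ω| < b / 2 ^ ℓ₀ := by
        rcases Nat.eq_zero_or_pos ℓ₀ with h | h
        · rw [h]; simpa using htb
        · have hmin := Nat.find_min hex (show ℓ₀ - 1 < ℓ₀ from Nat.sub_lt h one_pos)
          push_neg at hmin
          rwa [Nat.sub_add_cancel h] at hmin
      have hmem : ω ∈ A j ℓ₀ := by
        simp only [hA_def, Set.mem_setOf_eq]
        exact hfind
      have hterm : (a j * |Zh j ω|) ^ q ≤ (A j ℓ₀).indicator (fun _ => (b / 2 ^ ℓ₀) ^ q) ω := by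
        rw [Set.indicator_of_mem hmem]
        exact Real.rpow_le_rpow ht0 htlt.le (by linarith)
      have hsum2 : (A j ℓ₀).indicator (fun _ => (b / 2 ^ ℓ₀) ^ q) ω
          ≤ ∑ ℓ ∈ Finset.range (L + 1), (A j ℓ).indicator (fun _ => (b / 2 ^ ℓ) ^ q) ω :=
        Finset.single_le_sum (fun ℓ _ => hindnn j ℓ ω)
          (Finset.mem_range.2 (Nat.lt_succ_of_le hl0L))
      linarith
  -- the good-event sum bound
  have goodsum : ∀ ω, (∀ j, a j * |Zh j ω| < b) →
      (∑ j, a j ^ q * |Zh j ω| ^ q) ≤ b ^ q + Wr ω := by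
    intro ω hgood
    have h1 : (∑ j, a j ^ q * |Zh j ω| ^ q) = ∑ j, (a j * |Zh j ω|) ^ q :=
      Finset.sum_congr rfl (fun j _ => (Real.mul_rpow (ha j) (abs_nonneg _)).symm)
    have h2 : (∑ j, (a j * |Zh j ω|) ^ q)
        ≤ ∑ j : Fin m, ((b / 2 ^ (L + 1)) ^ q
            + ∑ ℓ ∈ Finset.range (L + 1), (A j ℓ).indicator (fun _ => (b / 2 ^ ℓ) ^ q) ω) :=
      Finset.sum_le_sum (fun j _ => pt ω hgood j)
    have h3 : ∑ j : Fin m, ((b / 2 ^ (L + 1)) ^ q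
          + ∑ ℓ ∈ Finset.range (L + 1), (A j ℓ).indicator (fun _ => (b / 2 ^ ℓ) ^ q) ω)
        = (m : ℝ) * (b / 2 ^ (L + 1)) ^ q + Wr ω := by
      rw [Finset.sum_add_distrib, Finset.sum_const, Finset.card_univ, Fintype.card_fin,
        nsmul_eq_mul, hWr_def]
    -- m * (b/2^(L+1))^q ≤ b^q
    have h2m : (m : ℝ) ≤ (2 : ℝ) ^ (L + 1) := by
      have := Nat.lt_pow_succ_log_self (show 1 < 2 by norm_num) m
      exact_mod_cast this.le
    have hD1 : (1 : ℝ) ≤ (2 : ℝ) ^ (L + 1) := one_le_pow₀ (by norm_num)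
    have h2q : ((2 : ℝ) ^ (L + 1)) ≤ ((2 : ℝ) ^ (L + 1)) ^ q := by
      have := Real.rpow_le_rpow_of_exponent_le hD1 hq1
      rwa [Real.rpow_one] at this
    have hD0 : (0 : ℝ) < ((2 : ℝ) ^ (L + 1) : ℝ) ^ q := Real.rpow_pos_of_pos (by positivity) q
    have h4 : (m : ℝ) * (b / 2 ^ (L + 1)) ^ q ≤ b ^ q := by
      rw [Real.div_rpow hb0.le (by positivity)]
      rw [mul_div_assoc']
      rw [div_le_iff₀ hD0]
      have hbq : (0:ℝ) ≤ b ^ q := Real.rpow_nonneg hb0.le q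
      calc (m:ℝ) * b ^ q ≤ ((2:ℝ) ^ (L+1)) ^ q * b ^ q := by
            apply mul_le_mul_of_nonneg_right (le_trans h2m h2q) hbq
        _ = b ^ q * ((2:ℝ) ^ (L+1)) ^ q := by ring
    rw [h1]
    linarith [h2.trans_eq h3]
  haveI := hμ
  set s : ℝ := 8 * (c₀ + 1) * ((L : ℝ) + 1) * K * lam ^ q with hs_def
  have hs0 : 0 < s := by
    rw [hs_def]
    have h1 : (0:ℝ) < (L:ℝ) + 1 := by positivity
    have h2 : (0:ℝ) < lam ^ q := Real.rpow_pos_of_pos hlam0 q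
    have h3 : (0:ℝ) < c₀ + 1 := by linarith
    positivity
  -- per-term bound for the expectation computation
  have hterm_bound : ∀ (j : Fin m), ∀ ℓ ∈ Finset.range (L + 1),
      (b / 2 ^ ℓ) ^ q * ((c₀ + 1) * (a j ^ p * (b / 2 ^ (ℓ + 1)) ^ (-p)))
        ≤ (c₀ + 1) * a j ^ p * (4 * K * (lam ^ q * lam ^ (-p))) := by
    intro j ℓ _
    have hx0 : (0:ℝ) < b / 2 ^ ℓ := by positivity
    have hxb : b / 2 ^ ℓ ≤ b := div_le_self hb0.le (one_le_pow₀ (by norm_num))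
    have hhalf : b / 2 ^ (ℓ + 1) = (b / 2 ^ ℓ) / 2 := by
      rw [pow_succ, ← div_div]
    have hx2p : ((b / 2 ^ ℓ) / 2) ^ (-p) = (b / 2 ^ ℓ) ^ (-p) * 2 ^ p := by
      rw [Real.div_rpow hx0.le (by norm_num : (0:ℝ) ≤ 2), Real.rpow_neg (by norm_num : (0:ℝ) ≤ 2),
        div_eq_mul_inv, inv_inv]
    have hxqp : (b / 2 ^ ℓ) ^ q * (b / 2 ^ ℓ) ^ (-p) = (b / 2 ^ ℓ) ^ (q - p) := by
      rw [← Real.rpow_add hx0, ← sub_eq_add_neg]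
    have h2p4 : (2:ℝ) ^ p ≤ 4 := by
      have h1 : (2:ℝ) ^ p ≤ (2:ℝ) ^ (2:ℝ) := Real.rpow_le_rpow_of_exponent_le one_le_two hp2
      have h2 : (2:ℝ) ^ (2:ℝ) = 4 := by
        have h3 := Real.rpow_natCast (2:ℝ) 2
        norm_num at h3
        linarith
      linarith
    have hbqp : (b / 2 ^ ℓ) ^ (q - p) ≤ b ^ (q - p) := Real.rpow_le_rpow hx0.le hxb hqp0
    have hbK : b ^ (q - p) ≤ K * (lam ^ q * lam ^ (-p)) := by
      rw [hb_def, Real.mul_rpow hK0.le hlam0.le]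
      have h1 : K ^ (q - p) ≤ K := by
        have h2 := Real.rpow_le_rpow_of_exponent_le hK1 (show q - p ≤ 1 by linarith)
        rwa [Real.rpow_one] at h2
      have h2 : lam ^ (q - p) = lam ^ q * lam ^ (-p) := by
        rw [← Real.rpow_add hlam0, ← sub_eq_add_neg]
      rw [h2]
      exact mul_le_mul_of_nonneg_right h1 (by positivity)
    have hcnn : (0:ℝ) ≤ (c₀ + 1) * a j ^ p :=
      mul_nonneg (by linarith) (Real.rpow_nonneg (ha j) p)
    calc (b / 2 ^ ℓ) ^ q * ((c₀ + 1) * (a j ^ p * (b / 2 ^ (ℓ + 1)) ^ (-p)))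
        = (c₀ + 1) * a j ^ p * ((b / 2 ^ ℓ) ^ (q - p) * 2 ^ p) := by
          rw [hhalf, hx2p, ← hxqp]; ring
      _ ≤ (c₀ + 1) * a j ^ p * (b ^ (q - p) * 4) := by
          apply mul_le_mul_of_nonneg_left _ hcnn
          exact mul_le_mul hbqp h2p4 (Real.rpow_nonneg (by norm_num) p)
            (Real.rpow_nonneg hb0.le _)
      _ ≤ (c₀ + 1) * a j ^ p * (4 * K * (lam ^ q * lam ^ (-p))) := by
          apply mul_le_mul_of_nonneg_left _ hcnn
          linarith
  -- nonnegativity of the real per-term expression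
  have htnn : ∀ (j : Fin m) (ℓ : ℕ),
      (0:ℝ) ≤ (b / 2 ^ ℓ) ^ q * ((c₀ + 1) * (a j ^ p * (b / 2 ^ (ℓ + 1)) ^ (-p))) := by
    intro j ℓ
    exact mul_nonneg (Real.rpow_nonneg (by positivity) q)
      (mul_nonneg (by linarith) (mul_nonneg (Real.rpow_nonneg (ha j) p)
        (Real.rpow_nonneg (by positivity) _)))
  -- expectation bound
  have hlint : ∫⁻ ω, f ω ∂μ ≤ ENNReal.ofReal (s * (lam ^ (-p) / 2)) := by
    have h1 : ∫⁻ ω, f ω ∂μ = ∑ j, ∑ ℓ ∈ Finset.range (L + 1),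
        ENNReal.ofReal ((b / 2 ^ ℓ) ^ q) * μ (A j ℓ) := by
      rw [hf_def]
      rw [lintegral_finset_sum _ (fun j _ => Finset.measurable_sum _
        (fun ℓ _ => measurable_const.indicator (hAmeas j ℓ)))]
      refine Finset.sum_congr rfl (fun j _ => ?_)
      rw [lintegral_finset_sum _ (fun ℓ _ => measurable_const.indicator (hAmeas j ℓ))]
      exact Finset.sum_congr rfl (fun ℓ _ => lintegral_indicator_const (hAmeas j ℓ) _)
    rw [h1]
    calc ∑ j, ∑ ℓ ∈ Finset.range (L + 1), ENNReal.ofReal ((b / 2 ^ ℓ) ^ q) * μ (A j ℓ)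
        ≤ ∑ j, ∑ ℓ ∈ Finset.range (L + 1),
            ENNReal.ofReal ((b / 2 ^ ℓ) ^ q * ((c₀ + 1) * (a j ^ p * (b / 2 ^ (ℓ + 1)) ^ (-p)))) := by
          refine Finset.sum_le_sum (fun j _ => Finset.sum_le_sum (fun ℓ _ => ?_))
          have hAe : A j ℓ = {ω | b / 2 ^ (ℓ + 1) ≤ a j * |Zh j ω|} := rfl
          calc ENNReal.ofReal ((b / 2 ^ ℓ) ^ q) * μ (A j ℓ)
              ≤ ENNReal.ofReal ((b / 2 ^ ℓ) ^ q)
                  * ENNReal.ofReal ((c₀ + 1) * (a j ^ p * (b / 2 ^ (ℓ + 1)) ^ (-p))) := by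
                apply mul_le_mul_right
                rw [hAe]
                exact tail j _ (by positivity)
            _ = ENNReal.ofReal ((b / 2 ^ ℓ) ^ q * ((c₀ + 1) * (a j ^ p * (b / 2 ^ (ℓ + 1)) ^ (-p)))) :=
                (ENNReal.ofReal_mul (Real.rpow_nonneg (by positivity) q)).symm
      _ = ENNReal.ofReal (∑ j, ∑ ℓ ∈ Finset.range (L + 1),
            (b / 2 ^ ℓ) ^ q * ((c₀ + 1) * (a j ^ p * (b / 2 ^ (ℓ + 1)) ^ (-p)))) := by
          rw [ENNReal.ofReal_sum_of_nonneg
            (fun j _ => Finset.sum_nonneg (fun ℓ _ => htnn j ℓ))]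
          exact Finset.sum_congr rfl
            (fun j _ => (ENNReal.ofReal_sum_of_nonneg (fun ℓ _ => htnn j ℓ)).symm)
      _ ≤ ENNReal.ofReal (s * (lam ^ (-p) / 2)) := by
          apply ENNReal.ofReal_le_ofReal
          have hMnn : (0:ℝ) ≤ 4 * K * (lam ^ q * lam ^ (-p)) := by positivity
          calc ∑ j, ∑ ℓ ∈ Finset.range (L + 1),
                (b / 2 ^ ℓ) ^ q * ((c₀ + 1) * (a j ^ p * (b / 2 ^ (ℓ + 1)) ^ (-p)))
              ≤ ∑ j : Fin m, ∑ ℓ ∈ Finset.range (L + 1),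
                  (c₀ + 1) * a j ^ p * (4 * K * (lam ^ q * lam ^ (-p))) :=
                Finset.sum_le_sum (fun j _ => Finset.sum_le_sum (hterm_bound j))
            _ = ∑ j : Fin m, ((L : ℝ) + 1) * ((c₀ + 1) * a j ^ p * (4 * K * (lam ^ q * lam ^ (-p)))) := by
                refine Finset.sum_congr rfl (fun j _ => ?_)
                rw [Finset.sum_const, Finset.card_range, nsmul_eq_mul]
                push_cast
                ring
            _ = (((L : ℝ) + 1) * (c₀ + 1) * (4 * K * (lam ^ q * lam ^ (-p)))) * ∑ j, a j ^ p := by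
                rw [Finset.mul_sum]
                exact Finset.sum_congr rfl (fun j _ => by ring)
            _ ≤ (((L : ℝ) + 1) * (c₀ + 1) * (4 * K * (lam ^ q * lam ^ (-p)))) * 1 := by
                apply mul_le_mul_of_nonneg_left hsum
                exact mul_nonneg (mul_nonneg (by positivity) (by linarith)) hMnn
            _ = s * (lam ^ (-p) / 2) := by rw [hs_def]; ring
  -- Markov's inequality
  have hMarkov : μ {ω | ENNReal.ofReal s ≤ f ω} ≤ ENNReal.ofReal (lam ^ (-p) / 2) := by
    have h := mul_meas_ge_le_lintegral₀ (μ := μ) hf_meas.aemeasurable (ENNReal.ofReal s)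
    have h2 := h.trans hlint
    rw [ENNReal.ofReal_mul hs0.le] at h2
    have hne : ENNReal.ofReal s ≠ 0 := (ENNReal.ofReal_pos.2 hs0).ne'
    exact (ENNReal.mul_le_mul_iff_right hne ENNReal.ofReal_ne_top).1 h2
  -- the bad event
  have hBad : μ (⋃ j, {ω | b ≤ a j * |Zh j ω|}) ≤ ENNReal.ofReal (lam ^ (-p) / 2) := by
    have hnn : (0:ℝ) ≤ lam ^ (-p) := Real.rpow_nonneg hlam0.le _
    calc μ (⋃ j, {ω | b ≤ a j * |Zh j ω|}) ≤ ∑' j, μ {ω | b ≤ a j * |Zh j ω|} :=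
          measure_iUnion_le _
      _ = ∑ j, μ {ω | b ≤ a j * |Zh j ω|} := tsum_fintype _
      _ ≤ ∑ j, ENNReal.ofReal ((c₀ + 1) * (a j ^ p * b ^ (-p))) :=
          Finset.sum_le_sum (fun j _ => tail j b hb0)
      _ = ENNReal.ofReal (∑ j, (c₀ + 1) * (a j ^ p * b ^ (-p))) :=
          (ENNReal.ofReal_sum_of_nonneg (fun j _ => mul_nonneg (by linarith)
            (mul_nonneg (Real.rpow_nonneg (ha j) p) (Real.rpow_nonneg hb0.le _)))).symm
      _ ≤ ENNReal.ofReal (lam ^ (-p) / 2) := by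
          apply ENNReal.ofReal_le_ofReal
          have hKp : K ^ (-p) ≤ K⁻¹ := by
            have h1 := Real.rpow_le_rpow_of_exponent_le hK1 (show -p ≤ -1 by linarith)
            rwa [Real.rpow_neg_one] at h1
          have hbp : b ^ (-p) = K ^ (-p) * lam ^ (-p) := by
            rw [hb_def, Real.mul_rpow hK0.le hlam0.le]
          calc ∑ j, (c₀ + 1) * (a j ^ p * b ^ (-p))
              = ((c₀ + 1) * b ^ (-p)) * ∑ j, a j ^ p := by
                rw [Finset.mul_sum]
                exact Finset.sum_congr rfl (fun j _ => by ring)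
            _ ≤ ((c₀ + 1) * b ^ (-p)) * 1 := by
                apply mul_le_mul_of_nonneg_left hsum
                exact mul_nonneg (by linarith) (Real.rpow_nonneg hb0.le _)
            _ ≤ lam ^ (-p) / 2 := by
                rw [mul_one, hbp]
                have h4 : K ^ (-p) * lam ^ (-p) ≤ K⁻¹ * lam ^ (-p) :=
                  mul_le_mul_of_nonneg_right hKp hnn
                have h5 : (c₀ + 1) * (K ^ (-p) * lam ^ (-p)) ≤ (c₀ + 1) * (K⁻¹ * lam ^ (-p)) :=
                  mul_le_mul_of_nonneg_left h4 (by linarith)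
                have h6 : (c₀ + 1) * (K⁻¹ * lam ^ (-p)) = lam ^ (-p) / 2 := by
                  rw [hK_def]
                  have hne : c₀ + 1 ≠ 0 := by linarith
                  field_simp
                linarith
  -- the threshold inequality
  have hthr : b ^ q + s ≤ 72 * (c₀ + 1) ^ 2 * Real.log (lam * m) * lam ^ q := by
    have hm2 : (2:ℝ) ≤ (m:ℝ) := by exact_mod_cast hm
    have hm0 : (0:ℝ) < (m:ℝ) := by linarith
    have hlogm : Real.log 2 ≤ Real.log m := Real.log_le_log (by norm_num) hm2
    have hlog2 : (0.6931471803 : ℝ) < Real.log 2 := Real.log_two_gt_d9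
    have hG1 : Real.log (m:ℝ) ≤ Real.log (lam * m) :=
      Real.log_le_log hm0 (le_mul_of_one_le_left hm0.le hlam)
    have hGhalf : (1/2 : ℝ) ≤ Real.log (lam * m) := by linarith
    have hLlog : (L:ℝ) * Real.log 2 ≤ Real.log m := by
      have h1 : ((2:ℕ) ^ L : ℕ) ≤ m := Nat.pow_log_le_self 2 (by omega)
      have h2 : ((2:ℝ)) ^ L ≤ (m:ℝ) := by exact_mod_cast h1
      have h3 := Real.log_le_log (by positivity) h2
      rwa [Real.log_pow] at h3
    have hL4 : (L:ℝ) + 1 ≤ 4 * Real.log (lam * m) := by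
      have hLnn : (0:ℝ) ≤ (L:ℝ) := Nat.cast_nonneg L
      nlinarith [mul_nonneg hLnn (show (0:ℝ) ≤ Real.log 2 - 1/2 by linarith)]
    have hX : (0:ℝ) < lam ^ q := Real.rpow_pos_of_pos hlam0 q
    have hbq : b ^ q ≤ K ^ 2 * lam ^ q := by
      rw [hb_def, Real.mul_rpow hK0.le hlam0.le]
      have h1 : K ^ q ≤ K ^ (2:ℝ) := Real.rpow_le_rpow_of_exponent_le hK1 hq2
      have h2 : K ^ (2:ℝ) = K ^ 2 := by norm_num
      exact mul_le_mul_of_nonneg_right (h1.trans_eq h2) hX.le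
    have hc1 : (0:ℝ) < (c₀ + 1) ^ 2 := by positivity
    have h5 : ((L:ℝ) + 1) * lam ^ q ≤ 4 * (Real.log (lam * m) * lam ^ q) := by
      nlinarith [mul_le_mul_of_nonneg_right hL4 hX.le]
    have h6 : lam ^ q ≤ 2 * (Real.log (lam * m) * lam ^ q) := by
      nlinarith [mul_le_mul_of_nonneg_right hGhalf hX.le]
    have h7 := mul_le_mul_of_nonneg_left h5 hc1.le
    have h8 := mul_le_mul_of_nonneg_left h6 hc1.le
    rw [hs_def]
    rw [hK_def] at hbq ⊢
    nlinarith [hbq, h7, h8]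
  -- the inclusion
  have hsub : {ω | 72 * (c₀ + 1) ^ 2 * Real.log (lam * m) * lam ^ q ≤ ∑ j, a j ^ q * |Zh j ω| ^ q}
      ⊆ (⋃ j, {ω | b ≤ a j * |Zh j ω|}) ∪ {ω | ENNReal.ofReal s ≤ f ω} := by
    intro ω hω
    simp only [Set.mem_setOf_eq] at hω
    by_cases hB : ω ∈ ⋃ j, {ω | b ≤ a j * |Zh j ω|}
    · exact Set.mem_union_left _ hB
    · refine Set.mem_union_right _ ?_
      have hgood : ∀ j, a j * |Zh j ω| < b := by
        intro j
        by_contra hcon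
        push_neg at hcon
        exact hB (Set.mem_iUnion.2 ⟨j, hcon⟩)
      have h1 := goodsum ω hgood
      have h3 : s ≤ Wr ω := by linarith
      show ENNReal.ofReal s ≤ f ω
      rw [← hfW ω]
      exact ENNReal.ofReal_le_ofReal h3
  -- putting everything together
  have hnn2 : (0:ℝ) ≤ lam ^ (-p) / 2 :=
    div_nonneg (Real.rpow_nonneg hlam0.le _) (by norm_num)
  calc μ {ω | 72 * (c₀ + 1) ^ 2 * Real.log (lam * m) * lam ^ q ≤ ∑ j, a j ^ q * |Zh j ω| ^ q}
      ≤ μ ((⋃ j, {ω | b ≤ a j * |Zh j ω|}) ∪ {ω | ENNReal.ofReal s ≤ f ω}) :=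
        measure_mono hsub
    _ ≤ μ (⋃ j, {ω | b ≤ a j * |Zh j ω|}) + μ {ω | ENNReal.ofReal s ≤ f ω} :=
        measure_union_le _ _
    _ ≤ ENNReal.ofReal (lam ^ (-p) / 2) + ENNReal.ofReal (lam ^ (-p) / 2) :=
        add_le_add hBad hMarkov
    _ = ENNReal.ofReal (lam ^ (-p)) := by
        rw [← ENNReal.ofReal_add hnn2 hnn2]
        congr 1
        ring
end

section
/- Fix a real base b with 1 < b ≤ 2. For all natural numbers n₁ and n₂, the distribution on ℕ obtained by independently sampling X from morris(b, n₁) and Y from morris(b, n₂) and then outputting merge(X, Y) is exactly the distribution morris(b, n₁ + n₂). -/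
open scoped ENNReal

/-- A coin flip returning `true` with probability `min p 1`. -/
noncomputable def coin (p : ℝ≥0∞) : PMF Bool := PMF.ofFintype (fun b => cond b (min p 1) (1 - min p 1))
  (by rw [Fintype.sum_bool]; exact add_tsub_cancel_of_le (min_le_right p 1))

/-- The Morris counter distribution with base `b` after `n` increments: starting from `0`,
each increment raises a counter `c` to `c + 1` with probability `b ^ (-c)`. -/
noncomputable def morris (b : ℝ) : ℕ → PMF ℕ
  | 0 => PMF.pure 0
  | n + 1 => (morris b n).bind fun c =>
      (coin (ENNReal.ofReal (b ^ (-(c : ℝ))))).bind fun h =>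
        PMF.pure (if h then c + 1 else c)

/-- Merging two Morris counters with values `x` and `y`: set `Z₀ = x`, and for
`i = 1, …, y` set `Zᵢ = Zᵢ₋₁ + 1` with probability `min 1 (b ^ (-Zᵢ₋₁ + i - 1))`, else
`Zᵢ = Zᵢ₋₁`; output `Z_y`. -/
noncomputable def morrisMerge (b : ℝ) (x : ℕ) : ℕ → PMF ℕ
  | 0 => PMF.pure x
  | y + 1 => (morrisMerge b x y).bind fun z =>
      (coin (ENNReal.ofReal (b ^ ((y : ℝ) - (z : ℝ))))).bind fun h =>
        PMF.pure (if h then z + 1 else z)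

/-!
Induction on `n₂`. One more increment of the second counter `Y` succeeds with probability
`b ^ (-Y)`, and it makes the merge perform one extra step, which increments the merged value `Z`
with probability `b ^ (Y - Z)`. Since `Y ≤ Z` on the support of the merge, both are genuine
probabilities and the two coins compose to a single coin of probability `b ^ (-Z)`: this is
exactly one Morris increment of `Z`. Commuting the first coin past the merge turns the
left-hand side for `n₂ + 1` into one Morris increment applied to the left-hand side for `n₂`.
-/

lemma PMF.bind_congr_of_support {α β : Type*} {p : PMF α} {f g : α → PMF β}
    (h : ∀ a ∈ p.support, f a = g a) : p.bind f = p.bind g := by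
  rw [← bindOnSupport_eq_bind, ← bindOnSupport_eq_bind]
  congr 1
  funext a ha
  exact h a ha

lemma coin_apply (p : ℝ≥0∞) (h : Bool) : coin p h = cond h (min p 1) (1 - min p 1) := rfl

noncomputable def bump (p : ℝ≥0∞) (z : ℕ) : PMF ℕ :=
  (coin p).bind fun h => PMF.pure (if h then z + 1 else z)

lemma morris_succ (b : ℝ) (n : ℕ) :
    morris b (n + 1) = (morris b n).bind fun c => bump (ENNReal.ofReal (b ^ (-(c : ℝ)))) c := rfl

lemma morrisMerge_succ (b : ℝ) (x y : ℕ) :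
    morrisMerge b x (y + 1) =
      (morrisMerge b x y).bind fun z => bump (ENNReal.ofReal (b ^ ((y : ℝ) - z))) z := rfl

lemma coin_bind_coin {p q : ℝ≥0∞} (hp : p ≤ 1) (hq : q ≤ 1) :
    ((coin p).bind fun h => if h then coin q else PMF.pure false) = coin (p * q) := by
  have hpq : p * q ≤ 1 := mul_le_one' hp hq
  ext h
  rw [PMF.bind_apply, tsum_bool]
  cases h
  · simp [coin_apply, hp, hq, hpq, ENNReal.mul_sub (fun _ _ => (hp.trans_lt ENNReal.one_lt_top).ne)]
    exact tsub_add_tsub_cancel hp (mul_le_of_le_one_right' hq)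
  · simp [coin_apply, hp, hq, hpq]

lemma coin_bind_bump {p q : ℝ≥0∞} (hp : p ≤ 1) (hq : q ≤ 1) (z : ℕ) :
    ((coin p).bind fun h => if h then bump q z else PMF.pure z) = bump (p * q) z := by
  conv_rhs => rw [bump, ← coin_bind_coin hp hq, PMF.bind_bind]
  congr 1
  funext h
  cases h <;> simp [bump]

lemma le_of_mem_support_morrisMerge {b : ℝ} {x y z : ℕ} (hz : z ∈ (morrisMerge b x y).support) :
    y ≤ z := by
  induction y generalizing z with
  | zero => exact Nat.zero_le z
  | succ y ih =>
    simp only [morrisMerge_succ, bump, PMF.mem_support_bind_iff, PMF.mem_support_pure_iff] at hz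
    obtain ⟨w, hw, h, hh, rfl⟩ := hz
    obtain hyw | rfl := (ih hw).lt_or_eq
    · split <;> omega
    · -- at `w = y` the merge coin has probability `b ^ 0 = 1`, so it cannot fail
      cases h
      · simp [coin_apply] at hh
      · simp

lemma ofReal_rpow_le_one {b : ℝ} (hb : 1 ≤ b) {e : ℝ} (he : e ≤ 0) : ENNReal.ofReal (b ^ e) ≤ 1 :=
  ENNReal.ofReal_le_one.mpr (Real.rpow_le_one_of_one_le_of_nonpos hb he)

lemma bump_bind_morrisMerge {b : ℝ} (hb : 1 ≤ b) (x y : ℕ) :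
    (bump (ENNReal.ofReal (b ^ (-(y : ℝ)))) y).bind (morrisMerge b x) =
      (morrisMerge b x y).bind fun z => bump (ENNReal.ofReal (b ^ (-(z : ℝ)))) z := by
  calc (bump (ENNReal.ofReal (b ^ (-(y : ℝ)))) y).bind (morrisMerge b x)
      = (coin (ENNReal.ofReal (b ^ (-(y : ℝ))))).bind fun h => (morrisMerge b x y).bind fun z =>
          if h then bump (ENNReal.ofReal (b ^ ((y : ℝ) - z))) z else PMF.pure z := by
        rw [bump, PMF.bind_bind]
        congr 1
        funext h
        cases h
        · simp [PMF.bind_pure]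
        · simp [morrisMerge_succ]
    _ = (morrisMerge b x y).bind fun z => (coin (ENNReal.ofReal (b ^ (-(y : ℝ))))).bind fun h =>
          if h then bump (ENNReal.ofReal (b ^ ((y : ℝ) - z))) z else PMF.pure z :=
        PMF.bind_comm _ _ _
    _ = (morrisMerge b x y).bind fun z => bump (ENNReal.ofReal (b ^ (-(z : ℝ)))) z := by
        refine PMF.bind_congr_of_support fun z hz => ?_
        have hyz : (y : ℝ) ≤ z := Nat.cast_le.mpr (le_of_mem_support_morrisMerge hz)
        rw [coin_bind_bump (ofReal_rpow_le_one hb (by simp)) (ofReal_rpow_le_one hb (by linarith)),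
          ← ENNReal.ofReal_mul (by positivity), ← Real.rpow_add (zero_lt_one.trans_le hb)]
        ring_nf

theorem stmt_10_general (b : ℝ) (hb1 : 1 < b) (n₁ n₂ : ℕ) :
    ((morris b n₁).bind fun x => (morris b n₂).bind fun y => morrisMerge b x y)
      = morris b (n₁ + n₂) := by
  induction n₂ with
  | zero => simp [morris, morrisMerge]
  | succ n ih =>
    calc ((morris b n₁).bind fun x => (morris b (n + 1)).bind fun y => morrisMerge b x y)
        = (morris b n₁).bind fun x => (morris b n).bind fun y =>
            (bump (ENNReal.ofReal (b ^ (-(y : ℝ)))) y).bind (morrisMerge b x) := by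
          simp only [morris_succ, PMF.bind_bind]
      _ = (morris b n₁).bind fun x => (morris b n).bind fun y =>
            (morrisMerge b x y).bind fun z => bump (ENNReal.ofReal (b ^ (-(z : ℝ)))) z := by
          simp only [bump_bind_morrisMerge hb1.le]
      _ = morris b (n₁ + n + 1) := by
          rw [morris_succ, ← ih]
          simp only [PMF.bind_bind]

/-- For any base `1 < b ≤ 2`, merging independent Morris counters run on `n₁` and `n₂`
increments yields exactly the distribution of a Morris counter run on `n₁ + n₂`
increments. -/
theorem stmt_10 (b : ℝ) (hb1 : 1 < b) (hb2 : b ≤ 2) (n₁ n₂ : ℕ) :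
    ((morris b n₁).bind fun x => (morris b n₂).bind fun y => morrisMerge b x y)
      = morris b (n₁ + n₂) :=
  stmt_10_general b hb1 n₁ n₂
end

section
/- Let ε, δ ∈ (0,1), let I and D be natural numbers, and set b = 1 + (εδ/2)². Let C_I be distributed according to morris(b, I) and C_D according to morris(b, D), independently, and let ñ = [(b^{C_I} − b)/(b − 1) + 1] − [(b^{C_D} − b)/(b − 1) + 1]. Then with probability at least 1 − δ, |ñ − (I − D)| ≤ ε(I + D). -/
open scoped ENNReal
open MeasureTheory

/-!
With `X(c) = (b ^ c - 1) / (b - 1)`, an increment of a Morris counter at value `c` raises `b ^ c`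
to `b ^ (c + 1)` with probability `b ^ (-c)`, so in expectation it adds exactly `b - 1` to `b ^ c`
and `(b ^ 2 - 1) b ^ c` to `b ^ (2c)`. Hence `X(C_n)` is an unbiased estimate of `n` with variance
`(b - 1) n (n - 1) / 2`, and the estimator of the statement is `X(C_I) - X(C_D)`. By independence
its variance is at most `(b - 1) (I + D) ^ 2 / 2 = ε² δ² (I + D) ^ 2 / 8`, so Chebyshev's
inequality bounds the failure probability by `δ² / 8 ≤ δ`.
-/

open Finset

namespace PMF

variable {α β : Type*}

lemma tsum_pure_mul (a : α) (f : α → ℝ≥0∞) : ∑' x, pure a x * f x = f a := by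
  rw [tsum_eq_single a fun x hx => by simp [pure_apply, hx]]
  simp

lemma tsum_bind_mul (p : PMF α) (g : α → PMF β) (f : β → ℝ≥0∞) :
    ∑' y, p.bind g y * f y = ∑' x, p x * ∑' y, g x y * f y := by
  simp only [bind_apply, ← ENNReal.tsum_mul_right, ← ENNReal.tsum_mul_left, mul_assoc]
  exact ENNReal.tsum_comm

lemma bind_map_prodMk_apply (p : PMF α) (q : PMF β) (x : α) (y : β) :
    (p.bind fun a => q.map fun b => (a, b)) (x, y) = p x * q y := by
  rw [bind_apply, tsum_eq_single x fun a ha => by simp [map_apply, Ne.symm ha]]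
  rw [map_apply, tsum_eq_single y fun b hb => by simp [Ne.symm hb]]
  simp

lemma bind_map_prodMk_apply_eq_zero {p : PMF α} {q : PMF β} {s : Finset α} {t : Finset β}
    (hp : ∀ a ∉ s, p a = 0) (hq : ∀ b ∉ t, q b = 0) :
    ∀ z ∉ s ×ˢ t, (p.bind fun a => q.map fun b => (a, b)) z = 0 := by
  rintro ⟨x, y⟩ hz
  rw [bind_map_prodMk_apply]
  rcases not_and_or.mp (mem_product.not.mp hz) with hx | hy
  · rw [hp x hx, zero_mul]
  · rw [hq y hy, mul_zero]

lemma toMeasure_setOf_lt_abs_le [MeasurableSpace α] [MeasurableSingletonClass α]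
    (p : PMF α) (s : Finset α) (hs : ∀ a ∉ s, p a = 0) (g : α → ℝ) {t : ℝ} (ht : 0 < t) :
    p.toMeasure {a | t < |g a|} ≤ ENNReal.ofReal ((∑ a ∈ s, (p a).toReal * g a ^ 2) / t ^ 2) := by
  have h_ind : ∀ a, {a | t < |g a|}.indicator p a ≤ p a * ENNReal.ofReal (g a ^ 2 / t ^ 2) := by
    intro a
    by_cases ha : t < |g a|
    · have : 1 ≤ g a ^ 2 / t ^ 2 := by
        rw [one_le_div (by positivity), ← sq_abs (g a)]
        exact pow_le_pow_left₀ ht.le ha.le 2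
      calc {a | t < |g a|}.indicator p a = p a * 1 := by simp [ha]
        _ ≤ _ := by gcongr; exact ENNReal.one_le_ofReal.mpr this
    · simp [ha]
  calc p.toMeasure {a | t < |g a|} ≤ ∑' a, p a * ENNReal.ofReal (g a ^ 2 / t ^ 2) := by
        rw [toMeasure_apply_eq_toOuterMeasure, toOuterMeasure_apply]
        exact ENNReal.tsum_le_tsum h_ind
    _ = ∑ a ∈ s, ENNReal.ofReal ((p a).toReal * (g a ^ 2 / t ^ 2)) := by
        rw [tsum_eq_sum fun a ha => by simp [hs a ha]]
        refine sum_congr rfl fun a _ => ?_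
        rw [ENNReal.ofReal_mul ENNReal.toReal_nonneg, ENNReal.ofReal_toReal (apply_ne_top p a)]
    _ = _ := by
        rw [← ENNReal.ofReal_sum_of_nonneg fun a _ => by positivity, sum_div]
        simp only [mul_div_assoc]

lemma ofReal_one_sub_le_toMeasure_setOf_abs_le [MeasurableSpace α] [MeasurableSingletonClass α]
    (p : PMF α) (s : Finset α) (hs : ∀ a ∉ s, p a = 0) (g : α → ℝ) {t : ℝ} (ht : 0 < t) :
    ENNReal.ofReal (1 - (∑ a ∈ s, (p a).toReal * g a ^ 2) / t ^ 2) ≤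
      p.toMeasure {a | |g a| ≤ t} := by
  have h_cover : 1 ≤ p.toMeasure {a | |g a| ≤ t} + p.toMeasure {a | t < |g a|} := by
    rw [← measure_univ (μ := p.toMeasure)]
    refine (measure_mono fun a _ => ?_).trans (measure_union_le _ _)
    exact le_or_gt |g a| t
  rw [ENNReal.ofReal_sub _ (by positivity), ENNReal.ofReal_one, tsub_le_iff_right]
  exact h_cover.trans (by gcongr; exact toMeasure_setOf_lt_abs_le p s hs g ht)

end PMF

lemma sum_sum_mul_mul_sub_sq {ι κ : Type*} (s : Finset ι) (t : Finset κ) (w : ι → ℝ) (w' : κ → ℝ)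
    (u : ι → ℝ) (v : κ → ℝ) (hw : ∑ x ∈ s, w x = 1) (hw' : ∑ y ∈ t, w' y = 1)
    (hv : ∑ y ∈ t, w' y * v y = 0) :
    ∑ x ∈ s, ∑ y ∈ t, w x * w' y * (u x - v y) ^ 2 =
      ∑ x ∈ s, w x * u x ^ 2 + ∑ y ∈ t, w' y * v y ^ 2 := by
  have h : ∀ x y, w x * w' y * (u x - v y) ^ 2 =
      w x * u x ^ 2 * w' y + w x * (w' y * v y ^ 2) - 2 * (w x * u x) * (w' y * v y) := by
    intros; ring
  simp only [h, sum_sub_distrib, sum_add_distrib, ← mul_sum, ← sum_mul, hw', hv, hw]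
  ring

lemma tsum_coin_mul {q : ℝ} (hq0 : 0 ≤ q) (hq1 : q ≤ 1) (f : Bool → ℝ≥0∞) :
    ∑' h, coin (ENNReal.ofReal q) h * f h =
      ENNReal.ofReal q * f true + ENNReal.ofReal (1 - q) * f false := by
  have hmin : min (ENNReal.ofReal q) 1 = ENNReal.ofReal q :=
    min_eq_left (ENNReal.ofReal_le_one.mpr hq1)
  rw [tsum_bool, ENNReal.ofReal_sub _ hq0, ENNReal.ofReal_one, add_comm]
  simp [coin, hmin]

section Morris

variable {b : ℝ}

lemma morris_apply_eq_zero_of_lt {n c : ℕ} (h : n < c) : morris b n c = 0 := by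
  induction n generalizing c with
  | zero => simp [morris, PMF.pure_apply, h.ne']
  | succ n ih =>
    simp only [morris, PMF.bind_apply, ENNReal.tsum_eq_zero, mul_eq_zero]
    intro a
    rcases le_or_gt a n with ha | ha
    · refine .inr fun h' => .inr ?_
      cases h' <;> simp [PMF.pure_apply] <;> omega
    · exact .inl (ih ha)

lemma tsum_morris_succ_mul (hb : 1 ≤ b) (n : ℕ) (f : ℕ → ℝ) (hf : ∀ c, 0 ≤ f c) :
    ∑' c, morris b (n + 1) c * ENNReal.ofReal (f c) =
      ∑' c, morris b n c * ENNReal.ofReal ((b ^ c)⁻¹ * f (c + 1) + (1 - (b ^ c)⁻¹) * f c) := by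
  rw [morris, PMF.tsum_bind_mul]
  refine tsum_congr fun c => ?_
  have hb0 : 0 ≤ b := zero_le_one.trans hb
  have hq0 : 0 ≤ (b ^ c)⁻¹ := by positivity
  have hq1 : (b ^ c)⁻¹ ≤ 1 := inv_le_one_of_one_le₀ (one_le_pow₀ hb)
  have hrpow : b ^ (-(c : ℝ)) = (b ^ c)⁻¹ := by
    rw [Real.rpow_neg hb0, Real.rpow_natCast]
  rw [PMF.tsum_bind_mul, hrpow, tsum_coin_mul hq0 hq1, PMF.tsum_pure_mul, PMF.tsum_pure_mul,
    ENNReal.ofReal_add (mul_nonneg hq0 (hf _)) (mul_nonneg (by linarith) (hf c)),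
    ENNReal.ofReal_mul hq0, ENNReal.ofReal_mul (by linarith)]
  simp

lemma morris_apply_eq_zero_of_notMem_range {n c : ℕ} (h : c ∉ range (n + 1)) :
    morris b n c = 0 :=
  morris_apply_eq_zero_of_lt (by simpa using h)

/-- `morris b n` is supported in `[0, n]` (`morris_apply_eq_zero_of_lt`), so this is the
expectation of `f` under `morris b n`. -/
noncomputable def morrisMean (b : ℝ) (n : ℕ) (f : ℕ → ℝ) : ℝ :=
  ∑ c ∈ range (n + 1), (morris b n c).toReal * f c

lemma morrisMean_eq_toReal_tsum (n : ℕ) {f : ℕ → ℝ} (hf : ∀ c, 0 ≤ f c) :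
    morrisMean b n f = (∑' c, morris b n c * ENNReal.ofReal (f c)).toReal := by
  rw [tsum_eq_sum (s := range (n + 1)) fun c hc => by
      rw [morris_apply_eq_zero_of_notMem_range hc, zero_mul],
    ENNReal.toReal_sum fun c _ => ENNReal.mul_ne_top (PMF.apply_ne_top _ _) ENNReal.ofReal_ne_top]
  simp [morrisMean, ENNReal.toReal_ofReal (hf _)]

lemma morrisMean_succ (hb : 1 ≤ b) (n : ℕ) {f : ℕ → ℝ} (hf : ∀ c, 0 ≤ f c) :
    morrisMean b (n + 1) f =
      morrisMean b n fun c => (b ^ c)⁻¹ * f (c + 1) + (1 - (b ^ c)⁻¹) * f c := by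
  have hq0 (c : ℕ) : 0 ≤ (b ^ c)⁻¹ := inv_nonneg.mpr (pow_nonneg (zero_le_one.trans hb) c)
  have hq1 (c : ℕ) : (b ^ c)⁻¹ ≤ 1 := inv_le_one_of_one_le₀ (one_le_pow₀ hb)
  rw [morrisMean_eq_toReal_tsum _ hf, tsum_morris_succ_mul hb n f hf,
    morrisMean_eq_toReal_tsum _ fun c =>
      add_nonneg (mul_nonneg (hq0 c) (hf _)) (mul_nonneg (sub_nonneg.mpr (hq1 c)) (hf c))]

lemma morrisMean_zero (f : ℕ → ℝ) : morrisMean b 0 f = f 0 := by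
  simp [morrisMean, morris]

lemma sum_range_morris_toReal (n : ℕ) : ∑ c ∈ range (n + 1), (morris b n c).toReal = 1 := by
  simpa [morrisMean] using morrisMean_eq_toReal_tsum (b := b) n (f := fun _ => 1) fun _ => zero_le_one

lemma morrisMean_const (n : ℕ) (a : ℝ) : morrisMean b n (fun _ => a) = a := by
  simp [morrisMean, ← sum_mul, sum_range_morris_toReal]

lemma morrisMean_add (n : ℕ) (f g : ℕ → ℝ) :
    morrisMean b n (fun c => f c + g c) = morrisMean b n f + morrisMean b n g := by
  simp [morrisMean, mul_add, sum_add_distrib]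

lemma morrisMean_const_mul (n : ℕ) (a : ℝ) (f : ℕ → ℝ) :
    morrisMean b n (fun c => a * f c) = a * morrisMean b n f := by
  simp [morrisMean, mul_sum, mul_left_comm]

lemma morrisMean_pow (hb : 1 ≤ b) (n : ℕ) : morrisMean b n (b ^ ·) = 1 + (b - 1) * n := by
  induction n with
  | zero => simp [morrisMean_zero]
  | succ n ih =>
    have hstep : (fun c : ℕ => (b ^ c)⁻¹ * b ^ (c + 1) + (1 - (b ^ c)⁻¹) * b ^ c) =
        fun c => b ^ c + (b - 1) := by
      ext c
      have : b ^ c ≠ 0 := (pow_pos (by linarith) c).ne'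
      field_simp
      ring
    rw [morrisMean_succ hb n fun c => by positivity, hstep, morrisMean_add, morrisMean_const, ih]
    push_cast
    ring

lemma morrisMean_pow_sq (hb : 1 ≤ b) (n : ℕ) :
    morrisMean b n (fun c => (b ^ c) ^ 2) =
      1 + (b ^ 2 - 1) * n + (b ^ 2 - 1) * (b - 1) * (n * (n - 1) / 2) := by
  induction n with
  | zero => simp [morrisMean_zero]
  | succ n ih =>
    have hstep : (fun c : ℕ => (b ^ c)⁻¹ * (b ^ (c + 1)) ^ 2 + (1 - (b ^ c)⁻¹) * (b ^ c) ^ 2) =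
        fun c => (b ^ c) ^ 2 + (b ^ 2 - 1) * b ^ c := by
      ext c
      have : b ^ c ≠ 0 := (pow_pos (by linarith) c).ne'
      field_simp
      ring
    rw [morrisMean_succ hb n fun c => by positivity, hstep, morrisMean_add, morrisMean_const_mul,
      ih, morrisMean_pow hb]
    push_cast
    ring

noncomputable def morrisEstimate (b : ℝ) (c : ℕ) : ℝ := (b ^ c - 1) / (b - 1)

lemma sub_div_sub_one_add_one_eq_morrisEstimate (hb : b ≠ 1) (c : ℕ) :
    (b ^ c - b) / (b - 1) + 1 = morrisEstimate b c := by
  have : b - 1 ≠ 0 := sub_ne_zero.mpr hb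
  rw [morrisEstimate]
  field_simp
  ring

lemma morrisMean_estimate_sub (hb : 1 < b) (n : ℕ) :
    morrisMean b n (fun c => morrisEstimate b c - n) = 0 := by
  have hb0 : b - 1 ≠ 0 := by linarith
  have h : (fun c => morrisEstimate b c - n) =
      fun c => (b - 1)⁻¹ * b ^ c + -((1 + (b - 1) * n) / (b - 1)) := by
    ext c
    simp only [morrisEstimate]
    field_simp
    ring
  rw [h, morrisMean_add, morrisMean_const_mul, morrisMean_const, morrisMean_pow hb.le]
  field_simp
  ring

lemma morrisMean_estimate_sub_sq (hb : 1 < b) (n : ℕ) :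
    morrisMean b n (fun c => (morrisEstimate b c - n) ^ 2) = (b - 1) * (n * (n - 1) / 2) := by
  have hb0 : b - 1 ≠ 0 := by linarith
  set m := 1 + (b - 1) * n
  have h : (fun c => (morrisEstimate b c - n) ^ 2) = fun c =>
      ((b - 1) ^ 2)⁻¹ * (b ^ c) ^ 2 + (-(2 * m / (b - 1) ^ 2) * b ^ c + m ^ 2 / (b - 1) ^ 2) := by
    ext c
    simp only [morrisEstimate, m]
    field_simp
    ring
  rw [h, morrisMean_add, morrisMean_add, morrisMean_const_mul, morrisMean_const_mul,
    morrisMean_const, morrisMean_pow hb.le, morrisMean_pow_sq hb.le]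
  field_simp
  ring

end Morris

lemma morris_pair_variance {b : ℝ} (hb : 1 < b) (I D : ℕ) :
    ∑ z ∈ range (I + 1) ×ˢ range (D + 1),
        (((morris b I).bind fun x => (morris b D).map fun y => (x, y)) z).toReal *
          (morrisEstimate b z.1 - morrisEstimate b z.2 - (I - D)) ^ 2 =
      (b - 1) * (I * (I - 1) / 2) + (b - 1) * (D * (D - 1) / 2) := by
  have h_regroup (x y : ℕ) : morrisEstimate b x - morrisEstimate b y - (I - D) =
      (morrisEstimate b x - I) - (morrisEstimate b y - D) := by ring
  simp only [sum_product, PMF.bind_map_prodMk_apply, ENNReal.toReal_mul, h_regroup]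
  rw [sum_sum_mul_mul_sub_sq _ _ _ _ _ _ (sum_range_morris_toReal I) (sum_range_morris_toReal D)
      (morrisMean_estimate_sub hb D)]
  exact congrArg₂ (· + ·) (morrisMean_estimate_sub_sq hb I) (morrisMean_estimate_sub_sq hb D)

theorem stmt_13_general (ε δ : ℝ) (hε0 : 0 < ε) (hδ0 : 0 < δ) (hδ1 : δ < 1)
    (I D : ℕ) (b : ℝ) (hb : b = 1 + (ε * δ / 2) ^ 2) :
    ENNReal.ofReal (1 - δ) ≤
      ((morris b I).bind fun cI => (morris b D).map fun cD => (cI, cD)).toMeasure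
        {p : ℕ × ℕ |
          |(((b ^ p.1 - b) / (b - 1) + 1) - ((b ^ p.2 - b) / (b - 1) + 1))
              - ((I : ℝ) - (D : ℝ))|
            ≤ ε * ((I : ℝ) + (D : ℝ))} := by
  have hb_sub : b - 1 = (ε * δ / 2) ^ 2 := by rw [hb]; ring
  have hb_gt : 1 < b := by nlinarith [mul_pos hε0 hδ0]
  rcases (I + D).eq_zero_or_pos with hID | hID
  · obtain ⟨rfl, rfl⟩ : I = 0 ∧ D = 0 := by omega
    simp only [morris, PMF.pure_bind, PMF.pure_map]
    rw [PMF.toMeasure_pure, Measure.dirac_apply_of_mem (by simp)]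
    exact ENNReal.ofReal_le_one.mpr (by linarith)
  have hID : (0 : ℝ) < I + D := by exact_mod_cast hID
  simp only [sub_div_sub_one_add_one_eq_morrisEstimate hb_gt.ne']
  refine le_trans (ENNReal.ofReal_le_ofReal ?_) (PMF.ofReal_one_sub_le_toMeasure_setOf_abs_le _ _
    (PMF.bind_map_prodMk_apply_eq_zero (fun _ => morris_apply_eq_zero_of_notMem_range)
      fun _ => morris_apply_eq_zero_of_notMem_range) _ (by positivity))
  rw [morris_pair_variance hb_gt, hb_sub, sub_le_sub_iff_left, div_le_iff₀ (by positivity)]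
  calc (ε * δ / 2) ^ 2 * (I * (I - 1) / 2) + (ε * δ / 2) ^ 2 * (D * (D - 1) / 2)
      = (ε * δ / 2) ^ 2 * ((I * (I - 1) + D * (D - 1)) / 2) := by ring
    _ ≤ (ε * δ / 2) ^ 2 * ((I + D) ^ 2 / 2) := by
        gcongr
        nlinarith [mul_nonneg I.cast_nonneg D.cast_nonneg (α := ℝ)]
    _ = δ / 8 * (δ * (ε * (I + D)) ^ 2) := by ring
    _ ≤ δ * (ε * (I + D)) ^ 2 := mul_le_of_le_one_left (by positivity) (by linarith)

/-- Signed Morris counter: for `ε, δ ∈ (0,1)` and base `b = 1 + (εδ/2)²`, if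
`C_I ~ morris(b, I)` and `C_D ~ morris(b, D)` are independent and
`ñ = [(b^{C_I} - b)/(b-1) + 1] - [(b^{C_D} - b)/(b-1) + 1]`, then with probability at
least `1 - δ`, `|ñ - (I - D)| ≤ ε (I + D)`. -/
theorem stmt_13 (ε δ : ℝ) (hε0 : 0 < ε) (hε1 : ε < 1) (hδ0 : 0 < δ) (hδ1 : δ < 1)
    (I D : ℕ) (b : ℝ) (hb : b = 1 + (ε * δ / 2) ^ 2) :
    ENNReal.ofReal (1 - δ) ≤
      ((morris b I).bind fun cI => (morris b D).map fun cD => (cI, cD)).toMeasure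
        {p : ℕ × ℕ |
          |(((b ^ p.1 - b) / (b - 1) + 1) - ((b ^ p.2 - b) / (b - 1) + 1))
              - ((I : ℝ) - (D : ℝ))|
            ≤ ε * ((I : ℝ) + (D : ℝ))} :=
  stmt_13_general ε δ hε0 hδ0 hδ1 I D b hb
end
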